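/- Let G be a finite group and x ∈ G an element of prime order p. If G = ⟨ N_G(A) : A an abelian subgroup of G with x ∈ A ⟩, then the commuting graph on the conjugacy class x^G is connected. -/

import Mathlib

open SimpleGraph

/-- The commuting graph on a subset `X` of a group `G`: vertices are the elements of `X`,
and two distinct vertices are adjacent iff they commute. -/
def commGraph {G : Type*} [Group G] (X : Set G) : SimpleGraph X where
  Adj a b := a ≠ b ∧ (a : G) * (b : G) = (b : G) * (a : G)
  symm := ⟨fun a b h => ⟨h.1.symm, h.2.symm⟩⟩
  loopless := ⟨fun a h => h.1 rfl⟩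

/-- The connected component of `x` in the commuting graph on `X`, viewed as a subset of `G`. -/
def compSet {G : Type*} [Group G] (X : Set G) (x : G) (hx : x ∈ X) : Set G :=
  {y : G | ∃ hy : y ∈ X, (commGraph X).Reachable ⟨x, hx⟩ ⟨y, hy⟩}

/-- The stabilizer `H_x` in `G` of the connected component of `x` in the commuting graph on `X`,
under the conjugation action. -/
def conjStab {G : Type*} [Group G] (X : Set G) (x : G) (hx : x ∈ X) : Set G :=
  {g : G | (fun y => g⁻¹ * y * g) '' compSet X x hx = compSet X x hx}

/-! Conjugation by `g` is an automorphism of the commuting graph on a normal subset `X`, so the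
`g` for which `g x g⁻¹` lies in the component of `x` form a subgroup. If `A` is abelian, contains
`x` and is normalised by `g`, then `g x g⁻¹ ∈ A` commutes with `x`, so `g` belongs to that
subgroup. Hence the subgroup is all of `G`, and every conjugate of `x` is in the component of `x`. -/

section CommGraph

variable {G H : Type*} [Group G] [Group H]

def commGraphHomOfInjective (f : G →* H) (hf : Function.Injective f) {X : Set G} {Y : Set H}
    (hXY : Set.MapsTo f X Y) : commGraph X →g commGraph Y where
  toFun y := ⟨f y, hXY y.2⟩
  map_rel' := fun {a b} ⟨hne, hcomm⟩ =>
    ⟨fun h => hne (Subtype.ext (hf (congrArg Subtype.val h))),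
      (map_mul f a.1 b.1).symm.trans ((congrArg f hcomm).trans (map_mul f b.1 a.1))⟩

variable {X : Set G}

theorem self_mem_compSet {x : G} (hx : x ∈ X) : x ∈ compSet X x hx :=
  ⟨hx, .refl _⟩

theorem mem_compSet_of_commute {x y : G} (hx : x ∈ X) (hy : y ∈ X) (hxy : Commute x y) :
    y ∈ compSet X x hx := by
  rcases eq_or_ne x y with rfl | hne
  · exact self_mem_compSet hx
  · exact ⟨hy, Adj.reachable ⟨fun h => hne (congrArg Subtype.val h), hxy⟩⟩

theorem compSet_symm {x y : G} {hx : x ∈ X} (hy : y ∈ compSet X x hx) :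
    x ∈ compSet X y hy.1 :=
  ⟨hx, hy.2.symm⟩

theorem compSet_trans {x y z : G} {hx : x ∈ X} (hy : y ∈ compSet X x hx)
    (hz : z ∈ compSet X y hy.1) : z ∈ compSet X x hx :=
  ⟨hz.1, hy.2.trans hz.2⟩

theorem connected_of_forall_mem_compSet {x : G} (hx : x ∈ X)
    (h : ∀ y ∈ X, y ∈ compSet X x hx) : (commGraph X).Connected :=
  have : Nonempty X := ⟨⟨x, hx⟩⟩
  ⟨fun u v => (h u u.2).2.symm.trans (h v v.2).2⟩

variable (hX : ∀ g : G, ∀ y ∈ X, g * y * g⁻¹ ∈ X)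

theorem conj_mem_compSet_conj {x y : G} {hx : x ∈ X} (hy : y ∈ compSet X x hx) (g : G) :
    g * y * g⁻¹ ∈ compSet X (g * x * g⁻¹) (hX g x hx) :=
  ⟨hX g y hy.1, hy.2.map <|
    commGraphHomOfInjective (MulAut.conj g).toMonoidHom (MulAut.conj g).injective (hX g)⟩

def componentStabilizer {x : G} (hx : x ∈ X) : Subgroup G where
  carrier := {g | g * x * g⁻¹ ∈ compSet X x hx}
  one_mem' := by
    simpa only [Set.mem_ofPred_eq, one_mul, inv_one, mul_one] using self_mem_compSet hx
  mul_mem' {g h} hg hh := by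
    have hconj := compSet_trans hg (conj_mem_compSet_conj hX hh g)
    rwa [show g * (h * x * h⁻¹) * g⁻¹ = g * h * x * (g * h)⁻¹ by group] at hconj
  inv_mem' {g} hg := by
    have hconj := conj_mem_compSet_conj hX hg g⁻¹
    rw [show g⁻¹ * (g * x * g⁻¹) * g⁻¹⁻¹ = x by group] at hconj
    exact compSet_symm hconj

theorem normalizer_le_componentStabilizer {x : G} (hx : x ∈ X) {A : Subgroup G} (hxA : x ∈ A)
    (hA : ∀ a ∈ A, ∀ b ∈ A, a * b = b * a) :
    Subgroup.normalizer (A : Set G) ≤ componentStabilizer hX hx := fun g hg =>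
  mem_compSet_of_commute hx (hX g x hx)
    (hA x hxA _ ((Subgroup.mem_normalizer_iff.1 hg x).1 hxA))

end CommGraph

theorem commGraph_conjClass_connected_of_abelian_normalizers_general
    {G : Type*} [Group G]
    (x : G)
    (hgen : (⨆ A ∈ {A : Subgroup G | x ∈ A ∧ ∀ a ∈ A, ∀ b ∈ A, a * b = b * a},
        Subgroup.normalizer (A : Set G)) = ⊤) :
    (commGraph {y : G | IsConj x y}).Connected := by
  have hX : ∀ g : G, ∀ y ∈ {y : G | IsConj x y}, g * y * g⁻¹ ∈ {y : G | IsConj x y} :=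
    fun g y hy => hy.trans (isConj_iff.2 ⟨g, rfl⟩)
  have hx : x ∈ {y : G | IsConj x y} := IsConj.refl x
  have hstab : componentStabilizer hX hx = ⊤ := by
    rw [eq_top_iff, ← hgen]
    exact iSup₂_le fun A ⟨hxA, hA⟩ => normalizer_le_componentStabilizer hX hx hxA hA
  refine connected_of_forall_mem_compSet hx fun y hy => ?_
  obtain ⟨g, rfl⟩ := isConj_iff.1 hy
  exact (hstab ▸ Subgroup.mem_top g : g ∈ componentStabilizer hX hx)

/-- Let `G` be a finite group and `x` an element of prime order `p`. If `G` is generated by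
the normalizers of the abelian subgroups containing `x`, then the commuting graph on the
conjugacy class `x^G` is connected. -/
theorem commGraph_conjClass_connected_of_abelian_normalizers
    {G : Type*} [Group G] [Finite G] (p : ℕ) (hp : p.Prime)
    (x : G) (hx : orderOf x = p)
    (hgen : (⨆ A ∈ {A : Subgroup G | x ∈ A ∧ ∀ a ∈ A, ∀ b ∈ A, a * b = b * a},
        Subgroup.normalizer (A : Set G)) = ⊤) :
    (commGraph {y : G | IsConj x y}).Connected :=
  commGraph_conjClass_connected_of_abelian_normalizers_general x hgen
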